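/- As ε → 0⁺, the functions λ±(ε) = 9 + 2ε − 4√(4+ε) ± 2√(36 + 13ε − (4ε+18)√(4+ε) + ε²) satisfy λ₊(ε) = 1 + √(2ε) + ε + (9/32)√2 · ε^{3/2} + o(ε^{3/2}) and λ₋(ε) = 1 − √(2ε) + ε − (9/32)√2 · ε^{3/2} + o(ε^{3/2}). -/
import Mathlib


open Filter Topology Asymptotics

noncomputable section

/-- The eigenvalue `λ₊(ε)`. -/
def lamPlus (ε : ℝ) : ℝ :=
  9 + 2 * ε - 4 * Real.sqrt (4 + ε) +
    2 * Real.sqrt (36 + 13 * ε - (4 * ε + 18) * Real.sqrt (4 + ε) + ε ^ 2)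

/-- The eigenvalue `λ₋(ε)`. -/
def lamMinus (ε : ℝ) : ℝ :=
  9 + 2 * ε - 4 * Real.sqrt (4 + ε) -
    2 * Real.sqrt (36 + 13 * ε - (4 * ε + 18) * Real.sqrt (4 + ε) + ε ^ 2)

set_option maxHeartbeats 1000000 in
lemma lam_key (ε : ℝ) (hε : 0 < ε) (hε1 : ε ≤ 1) :
    |lamPlus ε - (1 + Real.sqrt (2 * ε) + ε + (9 / 32) * Real.sqrt 2 * ε ^ ((3 : ℝ) / 2))|
      ≤ 2 * ε ^ 2 ∧
    |lamMinus ε - (1 - Real.sqrt (2 * ε) + ε - (9 / 32) * Real.sqrt 2 * ε ^ ((3 : ℝ) / 2))|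
      ≤ 2 * ε ^ 2 := by
  have h4 : (0:ℝ) ≤ 4 + ε := by linarith
  set s := Real.sqrt (4 + ε) with hs_def
  have hs2 : s ^ 2 = 4 + ε := Real.sq_sqrt h4
  have hs0 : 0 ≤ s := Real.sqrt_nonneg _
  have hsge : 2 ≤ s := by nlinarith
  have hsle : s ≤ 3 := by nlinarith
  have ht0' : (0:ℝ) ≤ 4 + ε - 2 * s := by nlinarith
  set t := Real.sqrt (4 + ε - 2 * s) with ht_def
  have ht2 : t ^ 2 = 4 + ε - 2 * s := Real.sq_sqrt ht0'
  have ht0 : 0 ≤ t := Real.sqrt_nonneg _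
  set r := Real.sqrt (2 * ε) with hr_def
  have hr2 : r ^ 2 = 2 * ε := Real.sq_sqrt (by linarith)
  have hr0 : 0 ≤ r := Real.sqrt_nonneg _
  have hrε : ε ≤ r := by nlinarith
  have hu2 : (Real.sqrt ε) ^ 2 = ε := Real.sq_sqrt hε.le
  have hu0 : 0 ≤ Real.sqrt ε := Real.sqrt_nonneg _
  -- ε^(3/2) = ε * √ε
  have hpow : ε ^ ((3 : ℝ) / 2) = ε * Real.sqrt ε := by
    rw [show (3:ℝ)/2 = 1 + 1/2 by norm_num, Real.rpow_add hε, Real.rpow_one,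
      Real.sqrt_eq_rpow]
  -- √2 * √ε = r
  have hsr : Real.sqrt 2 * Real.sqrt ε = r := by
    rw [hr_def, Real.sqrt_mul (by norm_num : (0:ℝ) ≤ 2)]
  have hterm : (9 / 32) * Real.sqrt 2 * ε ^ ((3 : ℝ) / 2) = (9/32) * ε * r := by
    rw [hpow]; rw [← hsr]; ring
  -- the inner sqrt simplifies
  have hinner : Real.sqrt (36 + 13 * ε - (4 * ε + 18) * s + ε ^ 2) = (s - 1) * t := by
    have h1 : 36 + 13 * ε - (4 * ε + 18) * s + ε ^ 2 = ((s - 1) * t) ^ 2 := by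
      have : ((s - 1) * t) ^ 2 = (s - 1) ^ 2 * (4 + ε - 2 * s) := by
        rw [mul_pow, ht2]
      rw [this]
      linear_combination (2*s - 8 - ε) * hs2
    rw [h1, Real.sqrt_sq (by nlinarith : (0:ℝ) ≤ (s - 1) * t)]
  set A := 2 * ((s - 1) * t) with hA_def
  set B := r * (1 + 9 * ε / 32) with hB_def
  have hA0 : 0 ≤ A := by nlinarith [mul_nonneg (by linarith : (0:ℝ) ≤ s - 1) ht0]
  have hB0 : r ≤ B := by nlinarith
  -- key bound on A^2 - B^2
  have hAB2 : |A ^ 2 - B ^ 2| ≤ ε ^ 3 := by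
    set P : ℝ := 144 + 50 * ε + (23/8) * ε ^ 2 with hP_def
    set Q : ℝ := (72 + 16 * ε) * s with hQ_def
    have hPQ0 : (P - Q) * (P + Q) = ε ^ 3 * (2016 + 529 * ε) / 64 := by
      rw [hP_def, hQ_def]
      linear_combination (-(72 + 16*ε)^2) * hs2
    have hPQpos : 288 ≤ P + Q := by
      rw [hP_def, hQ_def]; nlinarith
    have hval : P - Q = ε ^ 3 * (2016 + 529 * ε) / (64 * (P + Q)) := by
      rw [eq_div_iff (by positivity)]
      linear_combination 64 * hPQ0
    have hPQ1 : 0 ≤ P - Q := by rw [hval]; positivity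
    have hPQ2 : P - Q ≤ 2545 * ε ^ 3 / 18432 := by
      rw [hval]
      refine div_le_div₀ (by positivity) ?_ (by norm_num) (by linarith)
      nlinarith [mul_nonneg (pow_nonneg hε.le 3) (by linarith : (0:ℝ) ≤ 1 - ε)]
    have he3 : (0:ℝ) ≤ ε ^ 3 := by positivity
    have hE : A ^ 2 - B ^ 2 = (P - Q) - (81/512) * ε ^ 3 := by
      rw [hA_def, hB_def, hP_def, hQ_def]
      linear_combination (4*(s-1)^2) * ht2 - ((1 + 9*ε/32)^2) * hr2 + (-4*(2*s-8-ε)) * hs2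
    rw [hE, abs_le]
    have h431 : (0:ℝ) ≤ (431/512) * ε ^ 3 := by positivity
    constructor
    · nlinarith [hPQ1, he3]
    · nlinarith [hPQ2, he3]
  -- hence |A - B| ≤ ε^2
  have hABle : |A - B| ≤ ε ^ 2 := by
    have h1 : |A - B| * r ≤ |A ^ 2 - B ^ 2| := by
      have : |A ^ 2 - B ^ 2| = |A - B| * (A + B) := by
        rw [show A^2 - B^2 = (A - B) * (A + B) by ring, abs_mul,
          abs_of_nonneg (by linarith : (0:ℝ) ≤ A + B)]
      rw [this]
      have : 0 ≤ |A - B| := abs_nonneg _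
      nlinarith
    have h2 : |A - B| * r ≤ ε ^ 3 := le_trans h1 hAB2
    have h3 : 0 ≤ |A - B| := abs_nonneg _
    nlinarith
  have hsm2 : (s - 2) ^ 2 ≤ ε ^ 2 / 16 := by nlinarith
  have hsm2' : (0:ℝ) ≤ (s - 2) ^ 2 := sq_nonneg _
  constructor
  · have hplus : lamPlus ε - (1 + r + ε + (9/32) * ε * r)
        = (s - 2) ^ 2 + (A - B) := by
      rw [lamPlus, ← hs_def, hinner, hA_def, hB_def]
      linear_combination -hs2
    rw [hterm]
    calc |lamPlus ε - (1 + r + ε + 9 / 32 * ε * r)|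
        = |(s - 2) ^ 2 + (A - B)| := by rw [hplus]
      _ ≤ |(s - 2) ^ 2| + |A - B| := abs_add_le _ _
      _ ≤ ε ^ 2 / 16 + ε ^ 2 := by
          rw [abs_of_nonneg hsm2']; exact add_le_add hsm2 hABle
      _ ≤ 2 * ε ^ 2 := by nlinarith
  · have hminus : lamMinus ε - (1 - r + ε - (9/32) * ε * r)
        = (s - 2) ^ 2 - (A - B) := by
      rw [lamMinus, ← hs_def, hinner, hA_def, hB_def]
      linear_combination -hs2
    rw [hterm]
    calc |lamMinus ε - (1 - r + ε - 9 / 32 * ε * r)|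
        = |(s - 2) ^ 2 - (A - B)| := by rw [hminus]
      _ ≤ |(s - 2) ^ 2| + |A - B| := abs_sub _ _
      _ ≤ ε ^ 2 / 16 + ε ^ 2 := by
          rw [abs_of_nonneg hsm2']; exact add_le_add hsm2 hABle
      _ ≤ 2 * ε ^ 2 := by nlinarith

lemma sq_littleO :
    (fun ε : ℝ => 2 * ε ^ 2) =o[𝓝[>] (0 : ℝ)] (fun ε : ℝ => ε ^ ((3 : ℝ) / 2)) := by
  rw [isLittleO_iff]
  intro c hc
  simp only [Real.norm_eq_abs]
  have hδ : (0:ℝ) < min 1 ((c/2)^2) := by positivity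
  filter_upwards [Ioo_mem_nhdsGT_of_mem (Set.mem_Ico.mpr ⟨le_refl (0:ℝ), hδ⟩)]
    with ε hε
  obtain ⟨hε0, hεlt⟩ := hε
  have hε1 : ε ≤ 1 := le_of_lt (lt_of_lt_of_le hεlt (min_le_left _ _))
  have hεc : ε ≤ (c/2)^2 := le_of_lt (lt_of_lt_of_le hεlt (min_le_right _ _))
  have hpow : ε ^ ((3 : ℝ) / 2) = ε * Real.sqrt ε := by
    rw [show (3:ℝ)/2 = 1 + 1/2 by norm_num, Real.rpow_add hε0, Real.rpow_one,
      Real.sqrt_eq_rpow]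
  have hu2 : (Real.sqrt ε) ^ 2 = ε := Real.sq_sqrt hε0.le
  have hu0 : 0 ≤ Real.sqrt ε := Real.sqrt_nonneg _
  have huc : Real.sqrt ε ≤ c / 2 := by
    have := Real.sqrt_le_sqrt hεc
    rwa [Real.sqrt_sq (by positivity : (0:ℝ) ≤ c/2)] at this
  rw [hpow]
  rw [abs_of_nonneg (by positivity : (0:ℝ) ≤ 2 * ε^2),
    abs_of_nonneg (by positivity : (0:ℝ) ≤ ε * Real.sqrt ε)]
  have key : ε * Real.sqrt ε * Real.sqrt ε ≤ ε * Real.sqrt ε * (c/2) :=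
    mul_le_mul_of_nonneg_left huc (by positivity)
  have hε2 : ε ^ 2 = ε * Real.sqrt ε * Real.sqrt ε := by
    rw [mul_assoc, ← sq, hu2, sq]
  linarith

/-- As `ε → 0⁺`, `λ₊(ε) = 1 + √(2ε) + ε + (9/32)√2·ε^{3/2} + o(ε^{3/2})` and
`λ₋(ε) = 1 - √(2ε) + ε - (9/32)√2·ε^{3/2} + o(ε^{3/2})`. -/
theorem lamPlusMinus_asymptotics :
    (fun ε : ℝ => lamPlus ε -
        (1 + Real.sqrt (2 * ε) + ε + (9 / 32) * Real.sqrt 2 * ε ^ ((3 : ℝ) / 2)))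
      =o[𝓝[>] (0 : ℝ)] (fun ε : ℝ => ε ^ ((3 : ℝ) / 2)) ∧
    (fun ε : ℝ => lamMinus ε -
        (1 - Real.sqrt (2 * ε) + ε - (9 / 32) * Real.sqrt 2 * ε ^ ((3 : ℝ) / 2)))
      =o[𝓝[>] (0 : ℝ)] (fun ε : ℝ => ε ^ ((3 : ℝ) / 2)) := by
  have hmem : Set.Ioo (0:ℝ) 1 ∈ 𝓝[>] (0:ℝ) :=
    Ioo_mem_nhdsGT_of_mem (Set.mem_Ico.mpr ⟨le_refl (0:ℝ), one_pos⟩)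
  constructor
  · refine IsBigO.trans_isLittleO ?_ sq_littleO
    rw [isBigO_iff]
    refine ⟨1, ?_⟩
    filter_upwards [hmem] with ε hε
    have h := (lam_key ε hε.1 hε.2.le).1
    simp only [Real.norm_eq_abs, one_mul]
    rw [abs_of_nonneg (by positivity : (0:ℝ) ≤ 2 * ε^2)]
    exact h
  · refine IsBigO.trans_isLittleO ?_ sq_littleO
    rw [isBigO_iff]
    refine ⟨1, ?_⟩
    filter_upwards [hmem] with ε hε
    have h := (lam_key ε hε.1 hε.2.le).2
    simp only [Real.norm_eq_abs, one_mul]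
    rw [abs_of_nonneg (by positivity : (0:ℝ) ≤ 2 * ε^2)]
    exact h
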